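/- arXiv:1907.04062 — 4 statements merged into one kernel-verified Lean document; each statement's English description precedes it below -/
import Mathlib

section
/- Let G = (V, E) be a finite strongly connected digraph (V finite with at least 2 nodes, E ⊆ V × V containing no self-loops, and for every ordered pair of distinct nodes there is a directed path between them), and let real numbers l, u : E → ℝ satisfy 0 < l(e) ≤ u(e) for every edge e. Then there exists an integer flow assignment f : E → ℤ satisfying the interval constraints l(e) ≤ f(e) ≤ u(e) for every edge e and the balance constraints (for every node v_j, the sum of f over edges incoming to v_j equals the sum of f over edges outgoing from v_j) if and only if: (i) for every edge (v_j, v_i) ∈ E, ⌈l(v_j,v_i)⌉ ≤ ⌊u(v_j,v_i)⌋, and (ii) for every proper subset S ⊂ V, the sum of ⌈l(e)⌉ over all edges e = (v_j, v_i) ∈ E with v_j ∈ S and v_i ∉ S is at most the sum of ⌊u(e)⌋ over all edges e = (v_l, v_j) ∈ E with v_j ∈ S and v_l ∉ S. -/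
set_option linter.unusedSectionVars false

open Finset

namespace HoffmanCirc

variable {V : Type*} [Fintype V] [DecidableEq V]

/-- imbalance at node j : inflow minus outflow -/
def dd (E : Finset (V × V)) (f : V × V → ℤ) (j : V) : ℤ :=
  ∑ e ∈ E.filter (fun e => e.1 = j), f e - ∑ e ∈ E.filter (fun e => e.2 = j), f e

def feas (E : Finset (V × V)) (l u : V × V → ℝ) (f : V × V → ℤ) : Prop :=
  ∀ e ∈ E, ⌈l e⌉ ≤ f e ∧ f e ≤ ⌊u e⌋

/-- residual step from x to y -/
def rstep (E : Finset (V × V)) (l u : V × V → ℝ) (f : V × V → ℤ) (x y : V) : Prop :=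
  ((y, x) ∈ E ∧ f (y, x) < ⌊u (y, x)⌋) ∨ ((x, y) ∈ E ∧ ⌈l (x, y)⌉ < f (x, y))

lemma sum_fiber_fst (E : Finset (V × V)) (f : V × V → ℤ) (S : Finset V) :
    ∑ j ∈ S, ∑ e ∈ E.filter (fun e => e.1 = j), f e
      = ∑ e ∈ E.filter (fun e => e.1 ∈ S), f e := by
  rw [← Finset.sum_fiberwise_of_maps_to (g := fun e => e.1)
      (fun e he => (Finset.mem_filter.mp he).2) f]
  refine Finset.sum_congr rfl fun j hj => Finset.sum_congr ?_ fun _ _ => rfl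
  ext e
  simp only [Finset.mem_filter]
  constructor
  · rintro ⟨he, h1⟩; exact ⟨⟨he, h1 ▸ hj⟩, h1⟩
  · rintro ⟨⟨he, _⟩, h1⟩; exact ⟨he, h1⟩

lemma sum_fiber_snd (E : Finset (V × V)) (f : V × V → ℤ) (S : Finset V) :
    ∑ j ∈ S, ∑ e ∈ E.filter (fun e => e.2 = j), f e
      = ∑ e ∈ E.filter (fun e => e.2 ∈ S), f e := by
  rw [← Finset.sum_fiberwise_of_maps_to (g := fun e => e.2)
      (fun e he => (Finset.mem_filter.mp he).2) f]
  refine Finset.sum_congr rfl fun j hj => Finset.sum_congr ?_ fun _ _ => rfl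
  ext e
  simp only [Finset.mem_filter]
  constructor
  · rintro ⟨he, h1⟩; exact ⟨⟨he, h1 ▸ hj⟩, h1⟩
  · rintro ⟨⟨he, _⟩, h1⟩; exact ⟨he, h1⟩

lemma sum_dd (E : Finset (V × V)) (f : V × V → ℤ) (S : Finset V) :
    ∑ j ∈ S, dd E f j
      = ∑ e ∈ E.filter (fun e => e.1 ∈ S ∧ e.2 ∉ S), f e
        - ∑ e ∈ E.filter (fun e => e.2 ∈ S ∧ e.1 ∉ S), f e := by
  unfold dd
  rw [Finset.sum_sub_distrib, sum_fiber_fst, sum_fiber_snd]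
  have h1 : ∑ e ∈ E.filter (fun e => e.1 ∈ S), f e
      = ∑ e ∈ E.filter (fun e => e.1 ∈ S ∧ e.2 ∈ S), f e
        + ∑ e ∈ E.filter (fun e => e.1 ∈ S ∧ e.2 ∉ S), f e := by
    rw [← Finset.sum_filter_add_sum_filter_not (E.filter (fun e => e.1 ∈ S))
        (fun e => e.2 ∈ S) f, Finset.filter_filter, Finset.filter_filter]
  have h2 : ∑ e ∈ E.filter (fun e => e.2 ∈ S), f e
      = ∑ e ∈ E.filter (fun e => e.1 ∈ S ∧ e.2 ∈ S), f e
        + ∑ e ∈ E.filter (fun e => e.2 ∈ S ∧ e.1 ∉ S), f e := by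
    rw [← Finset.sum_filter_add_sum_filter_not (E.filter (fun e => e.2 ∈ S))
        (fun e => e.1 ∈ S) f, Finset.filter_filter, Finset.filter_filter]
    congr 1
    · apply Finset.sum_congr _ fun _ _ => rfl
      apply Finset.filter_congr; intro e _; simp [and_comm]
  rw [h1, h2]; ring

lemma sum_dd_univ (E : Finset (V × V)) (f : V × V → ℤ) :
    ∑ j : V, dd E f j = 0 := by
  rw [sum_dd]
  simp

/-- effect of a single-edge update on imbalances -/
lemma dd_update (E : Finset (V × V)) (f : V × V → ℤ) (e0 : V × V) (he0 : e0 ∈ E)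
    (c : ℤ) (j : V) :
    dd E (Function.update f e0 (f e0 + c)) j
      = dd E f j + (if j = e0.1 then c else 0) - (if j = e0.2 then c else 0) := by
  unfold dd
  have key : ∀ (P : V × V → Prop) [DecidablePred P], (P e0) →
      ∑ e ∈ E.filter P, Function.update f e0 (f e0 + c) e
        = (∑ e ∈ E.filter P, f e) + c := by
    intro P _ hP
    rw [Finset.sum_update_of_mem (Finset.mem_filter.mpr ⟨he0, hP⟩)]
    rw [← Finset.sum_filter_add_sum_filter_not (E.filter P) (fun e => e = e0) f]
    have : (E.filter P).filter (fun e => e = e0) = {e0} := by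
      ext e
      simp only [Finset.mem_filter, Finset.mem_singleton]
      exact ⟨fun h => h.2, fun h => ⟨⟨h ▸ he0, h ▸ hP⟩, h⟩⟩
    rw [this]
    have : (E.filter P).filter (fun e => ¬ e = e0) = (E.filter P) \ {e0} := by
      ext e; simp [Finset.mem_sdiff, and_comm]
    rw [this, Finset.sum_singleton]
    ring
  have key2 : ∀ (P : V × V → Prop) [DecidablePred P], (¬ P e0) →
      ∑ e ∈ E.filter P, Function.update f e0 (f e0 + c) e
        = ∑ e ∈ E.filter P, f e := by
    intro P _ hP
    apply Finset.sum_congr rfl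
    intro e he
    apply Function.update_of_ne
    rintro rfl
    exact hP (Finset.mem_filter.mp he).2
  by_cases h1 : j = e0.1 <;> by_cases h2 : j = e0.2
  · rw [key _ (h1.symm), key _ (h2.symm), if_pos h1, if_pos h2]; ring
  · rw [key _ (h1.symm), key2 _ (fun h => h2 h.symm), if_pos h1, if_neg h2]; ring
  · rw [key2 _ (fun h => h1 h.symm), key _ (h2.symm), if_neg h1, if_pos h2]; ring
  · rw [key2 _ (fun h => h1 h.symm), key2 _ (fun h => h2 h.symm), if_neg h1, if_neg h2]; ring

/-- extract a nodup chain -/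
lemma exists_nodup_chain {r : V → V → Prop} :
    ∀ (p : List V) (a b : V), List.Chain r a p →
      (a :: p).getLast (List.cons_ne_nil a p) = b →
      ∃ q : List V, q ⊆ p ∧ List.Chain r a q ∧
        ((a :: q).getLast (List.cons_ne_nil a q) = b) ∧ (a :: q).Nodup := by
  suffices H : ∀ (n : ℕ) (p : List V) (a b : V), p.length ≤ n → List.Chain r a p →
      (a :: p).getLast (List.cons_ne_nil a p) = b →
      ∃ q : List V, q ⊆ p ∧ List.Chain r a q ∧
        ((a :: q).getLast (List.cons_ne_nil a q) = b) ∧ (a :: q).Nodup by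
    intro p a b hc hl
    exact H p.length p a b le_rfl hc hl
  intro n
  induction n with
  | zero =>
    intro p a b hlen hchain hlast
    rw [List.length_eq_zero_iff.mp (Nat.le_zero.mp hlen)] at hchain hlast ⊢
    exact ⟨[], by simp, List.Chain.nil, hlast, by simp⟩
  | succ n IH =>
    intro p a b hlen hchain hlast
    by_cases ha : a ∈ p
    · obtain ⟨p₁, p₂, rfl⟩ := List.append_of_mem ha
      have hc2 : List.Chain r a p₂ := (List.isChain_cons_split.mp hchain).2
      have hl2 : (a :: p₂).getLast (List.cons_ne_nil a p₂) = b := by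
        have : a :: (p₁ ++ a :: p₂) = (a :: p₁) ++ (a :: p₂) := by simp
        rw [show (a :: (p₁ ++ a :: p₂)).getLast (List.cons_ne_nil _ _)
              = ((a :: p₁) ++ (a :: p₂)).getLast (by simp) from by congr 1 <;> simp] at hlast
        rwa [List.getLast_append] at hlast
      obtain ⟨q, hsub, h1, h2, h3⟩ := IH p₂ a b (by
        simp only [List.length_append, List.length_cons] at hlen; omega) hc2 hl2
      exact ⟨q, fun x hx => by simp [List.mem_append]; right; right; exact hsub hx,
        h1, h2, h3⟩
    · match p, hchain, hlast with
      | [], _, hlast => exact ⟨[], by simp, List.Chain.nil, hlast, by simp⟩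
      | c :: p', hchain, hlast =>
        have hac : r a c := (List.chain_cons.mp hchain).1
        have hc' : List.Chain r c p' := (List.chain_cons.mp hchain).2
        have hl' : (c :: p').getLast (List.cons_ne_nil c p') = b := by
          rw [List.getLast_cons (List.cons_ne_nil c p')] at hlast; exact hlast
        obtain ⟨q, hsub, h1, h2, h3⟩ := IH p' c b (by
          simp only [List.length_cons] at hlen; omega) hc' hl'
        refine ⟨c :: q, ?_, List.chain_cons.mpr ⟨hac, h1⟩, ?_, ?_⟩
        · intro x hx
          rcases List.mem_cons.mp hx with rfl | hx
          · simp
          · simp [hsub hx]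
        · rw [List.getLast_cons (List.cons_ne_nil c q)]; exact h2
        · refine List.nodup_cons.mpr ⟨?_, h3⟩
          intro hmem
          rcases List.mem_cons.mp hmem with rfl | hx
          · exact ha (by simp)
          · exact ha (by simp [hsub hx])


lemma chain_congr {r r' : V → V → Prop} :
    ∀ (p : List V) (a : V), (∀ x y, x ∈ a :: p → y ∈ a :: p → r x y → r' x y) →
      List.Chain r a p → List.Chain r' a p
  | [], _, _, _ => List.Chain.nil
  | b :: rest, a, h, hc => by
    rcases List.chain_cons.mp hc with ⟨hab, hcr⟩
    refine List.chain_cons.mpr ⟨h a b (by simp) (by simp) hab, ?_⟩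
    exact chain_congr rest b (fun x y hx hy => h x y (List.mem_cons_of_mem a hx)
      (List.mem_cons_of_mem a hy)) hcr

lemma augment_chain (E : Finset (V × V)) (l u : V × V → ℝ) :
    ∀ (p : List V) (a : V) (f : V × V → ℤ), feas E l u f →
      List.Chain (rstep E l u f) a p → (a :: p).Nodup →
      ∃ f', feas E l u f' ∧ ∀ j, dd E f' j
        = dd E f j + (if j = (a :: p).getLast (List.cons_ne_nil a p) then 1 else 0)
          - (if j = a then 1 else 0) := by
  intro p
  induction p with
  | nil =>
    intro a f hf _ _
    exact ⟨f, hf, fun j => (add_sub_cancel_right _ _).symm⟩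
  | cons b rest IH =>
    intro a f hf hchain hnodup
    rcases List.chain_cons.mp hchain with ⟨hab, hcr⟩
    have haout : a ∉ b :: rest := (List.nodup_cons.mp hnodup).1
    -- build f₁ : one unit pushed from a to b
    have hf₁ : ∃ f₁ : V × V → ℤ, feas E l u f₁ ∧
        (∀ j, dd E f₁ j = dd E f j + (if j = b then 1 else 0) - (if j = a then 1 else 0)) ∧
        (∀ e : V × V, e.1 ≠ a → e.2 ≠ a → f₁ e = f e) := by
      rcases hab with ⟨he0, hlt⟩ | ⟨he0, hlt⟩
      · refine ⟨Function.update f (b, a) (f (b, a) + 1), ?_, ?_, ?_⟩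
        · intro e he
          by_cases hee : e = (b, a)
          · subst hee
            rw [Function.update_self]
            exact ⟨le_trans (hf _ he).1 (by omega), by omega⟩
          · rw [Function.update_of_ne hee]; exact hf e he
        · intro j
          simpa using dd_update E f (b, a) he0 1 j
        · intro e h1 h2
          exact Function.update_of_ne (fun h => h2 (by rw [h])) _ _
      · refine ⟨Function.update f (a, b) (f (a, b) + (-1)), ?_, ?_, ?_⟩
        · intro e he
          by_cases hee : e = (a, b)
          · subst hee
            rw [Function.update_self]
            exact ⟨by omega, le_trans (by omega) (hf _ he).2⟩
          · rw [Function.update_of_ne hee]; exact hf e he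
        · intro j
          have hthis := dd_update E f (a, b) he0 (-1) j
          simp only at hthis
          rw [hthis]
          split_ifs <;> ring
        · intro e h1 h2
          exact Function.update_of_ne (fun h => h1 (by rw [h])) _ _
    obtain ⟨f₁, hfeas₁, hdd₁, hagree⟩ := hf₁
    have hchain₁ : List.Chain (rstep E l u f₁) b rest := by
      refine chain_congr rest b (fun x y hx hy hr => ?_) hcr
      have hxa : x ≠ a := fun h => haout (h ▸ hx)
      have hya : y ≠ a := fun h => haout (h ▸ hy)
      unfold rstep at hr ⊢
      rw [hagree (y, x) hya hxa, hagree (x, y) hxa hya]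
      exact hr
    obtain ⟨f', hfeas', hdd'⟩ := IH b f₁ hfeas₁ hchain₁ (List.nodup_cons.mp hnodup).2
    refine ⟨f', hfeas', fun j => ?_⟩
    rw [hdd' j, hdd₁ j, List.getLast_cons (List.cons_ne_nil b rest)]
    ring

lemma backward_main (E : Finset (V × V)) (l u : V × V → ℝ)
    (hi : ∀ e ∈ E, ⌈l e⌉ ≤ ⌊u e⌋)
    (hii : ∀ S : Finset V, S ⊂ Finset.univ →
      ∑ e ∈ E.filter (fun e => e.1 ∈ S ∧ e.2 ∉ S), ⌈l e⌉
        ≤ ∑ e ∈ E.filter (fun e => e.2 ∈ S ∧ e.1 ∉ S), ⌊u e⌋) :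
    ∃ f, feas E l u f ∧ ∀ j, dd E f j = 0 := by
  classical
  suffices H : ∀ (n : ℕ) (f : V × V → ℤ), feas E l u f →
      (∑ j : V, (dd E f j).natAbs) = n → ∃ g, feas E l u g ∧ ∀ j, dd E g j = 0 by
    exact H _ (fun e => ⌈l e⌉) (fun e he => ⟨le_rfl, hi e he⟩) rfl
  intro n
  induction n using Nat.strong_induction_on with
  | _ n IH =>
    intro f hf hn
    by_cases h0 : ∀ j, dd E f j = 0
    · exact ⟨f, hf, h0⟩
    push_neg at h0
    obtain ⟨j0, hj0⟩ := h0
    have hex : ∃ s, 0 < dd E f s := by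
      by_contra hc
      push_neg at hc
      have : ∑ j : V, dd E f j < ∑ _j : V, (0 : ℤ) :=
        Finset.sum_lt_sum (fun i _ => hc i)
          ⟨j0, Finset.mem_univ _, lt_of_le_of_ne (hc j0) hj0⟩
      rw [sum_dd_univ] at this
      simp at this
    obtain ⟨s, hs⟩ := hex
    set R : Finset V := Finset.univ.filter
      (fun x => Relation.ReflTransGen (rstep E l u f) s x) with hR
    have hsR : s ∈ R := Finset.mem_filter.mpr ⟨Finset.mem_univ _, Relation.ReflTransGen.refl⟩
    have hstep : ∀ x ∈ R, ∀ y, rstep E l u f x y → y ∈ R := fun x hx y hxy =>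
      Finset.mem_filter.mpr ⟨Finset.mem_univ _, ((Finset.mem_filter.mp hx).2).tail hxy⟩
    have ht : ∃ t ∈ R, dd E f t < 0 := by
      by_contra hc
      push_neg at hc
      by_cases hRuniv : R = Finset.univ
      · have : ∑ _j : V, (0 : ℤ) < ∑ j : V, dd E f j :=
          Finset.sum_lt_sum (fun i _ => hc i (hRuniv ▸ Finset.mem_univ i))
            ⟨s, Finset.mem_univ _, hs⟩
        rw [sum_dd_univ] at this
        simp at this
      · have hssub : R ⊂ Finset.univ := (Finset.subset_univ R).ssubset_of_ne hRuniv
        have hin : ∀ e ∈ E.filter (fun e => e.1 ∈ R ∧ e.2 ∉ R), f e = ⌈l e⌉ := by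
          intro e he
          rw [Finset.mem_filter] at he
          have heE := he.1
          have h1 := he.2.1
          have h2 := he.2.2
          by_contra hne
          have hlt : ⌈l e⌉ < f e := lt_of_le_of_ne (hf e heE).1 (Ne.symm hne)
          exact h2 (hstep e.1 h1 e.2 (Or.inr ⟨by simpa using heE, by simpa using hlt⟩))
        have hout : ∀ e ∈ E.filter (fun e => e.2 ∈ R ∧ e.1 ∉ R), f e = ⌊u e⌋ := by
          intro e he
          rw [Finset.mem_filter] at he
          have heE := he.1
          have h1 := he.2.1
          have h2 := he.2.2
          by_contra hne
          have hlt : f e < ⌊u e⌋ := lt_of_le_of_ne (hf e heE).2 hne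
          exact h2 (hstep e.2 h1 e.1 (Or.inl ⟨by simpa using heE, by simpa using hlt⟩))
        have hsum := sum_dd E f R
        rw [Finset.sum_congr rfl hin, Finset.sum_congr rfl hout] at hsum
        have hle := hii R hssub
        have hpos : 0 < ∑ j ∈ R, dd E f j :=
          lt_of_lt_of_le hs (Finset.single_le_sum (fun i hi => hc i hi) hsR)
        omega
    obtain ⟨t, htR, hdt⟩ := ht
    have hreach : Relation.ReflTransGen (rstep E l u f) s t := (Finset.mem_filter.mp htR).2
    obtain ⟨p0, hchain0, hlast0⟩ := List.exists_isChain_cons_of_relationReflTransGen hreach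
    obtain ⟨q, _, hchain, hlast, hnodup⟩ := exists_nodup_chain p0 s t hchain0 hlast0
    obtain ⟨f', hfeas', hdd'⟩ := augment_chain E l u q s f hf hchain hnodup
    rw [hlast] at hdd'
    have hst : s ≠ t := fun h => by rw [h] at hs; omega
    have hlt : ∑ j : V, (dd E f' j).natAbs < n := by
      rw [← hn]
      apply Finset.sum_lt_sum
      · intro i _
        have h := hdd' i
        by_cases h1 : i = t
        · subst h1
          rw [if_pos rfl, if_neg (fun h' => hst (h'.symm))] at h
          omega
        · by_cases h2 : i = s
          · subst h2
            rw [if_neg h1, if_pos rfl] at h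
            omega
          · rw [if_neg h1, if_neg h2] at h
            omega
      · refine ⟨s, Finset.mem_univ s, ?_⟩
        have h := hdd' s
        rw [if_neg (fun h' => hst h'), if_pos rfl] at h
        omega
    exact IH _ hlt f' hfeas' rfl

end HoffmanCirc



/-- Integer circulation theorem: for a finite strongly connected digraph
(`E : Finset (V × V)`, where an edge `(vj, vi)` is directed from `vi` to `vj`,
no self-loops) with real edge bounds `0 < l e ≤ u e`, an integer flow
assignment satisfying the interval constraints and the balance constraints
exists iff the integer circulation conditions hold. -/
theorem stmt_0 {V : Type*} [Fintype V] [DecidableEq V]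
    (hV : 2 ≤ Fintype.card V)
    (E : Finset (V × V)) (hE : ∀ e ∈ E, e.1 ≠ e.2)
    (hconn : ∀ x y : V, Relation.ReflTransGen (fun a b => (b, a) ∈ E) x y)
    (l u : V × V → ℝ)
    (hl : ∀ e ∈ E, 0 < l e) (hlu : ∀ e ∈ E, l e ≤ u e) :
    (∃ f : V × V → ℤ,
      (∀ e ∈ E, l e ≤ (f e : ℝ) ∧ (f e : ℝ) ≤ u e) ∧
      (∀ j : V,
        ∑ e ∈ E.filter (fun e => e.1 = j), f e
          = ∑ e ∈ E.filter (fun e => e.2 = j), f e)) ↔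
    ((∀ e ∈ E, ⌈l e⌉ ≤ ⌊u e⌋) ∧
     (∀ S : Finset V, S ⊂ Finset.univ →
       ∑ e ∈ E.filter (fun e => e.1 ∈ S ∧ e.2 ∉ S), ⌈l e⌉
         ≤ ∑ e ∈ E.filter (fun e => e.2 ∈ S ∧ e.1 ∉ S), ⌊u e⌋)) := by
  constructor
  · rintro ⟨f, hb, hbal⟩
    have hfeas : HoffmanCirc.feas E l u f := fun e he =>
      ⟨Int.ceil_le.mpr (hb e he).1, Int.le_floor.mpr (hb e he).2⟩
    have hdd : ∀ j, HoffmanCirc.dd E f j = 0 := fun j => sub_eq_zero.mpr (hbal j)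
    refine ⟨fun e he => le_trans (hfeas e he).1 (hfeas e he).2, fun S _ => ?_⟩
    have h := HoffmanCirc.sum_dd E f S
    rw [Finset.sum_eq_zero (fun j _ => hdd j)] at h
    have hcut : ∑ e ∈ E.filter (fun e => e.1 ∈ S ∧ e.2 ∉ S), f e
        = ∑ e ∈ E.filter (fun e => e.2 ∈ S ∧ e.1 ∉ S), f e := by omega
    calc ∑ e ∈ E.filter (fun e => e.1 ∈ S ∧ e.2 ∉ S), ⌈l e⌉
        ≤ ∑ e ∈ E.filter (fun e => e.1 ∈ S ∧ e.2 ∉ S), f e := by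
          apply Finset.sum_le_sum
          intro e he
          exact (hfeas e (Finset.mem_filter.mp he).1).1
      _ = ∑ e ∈ E.filter (fun e => e.2 ∈ S ∧ e.1 ∉ S), f e := hcut
      _ ≤ ∑ e ∈ E.filter (fun e => e.2 ∈ S ∧ e.1 ∉ S), ⌊u e⌋ := by
          apply Finset.sum_le_sum
          intro e he
          exact (hfeas e (Finset.mem_filter.mp he).1).2
  · rintro ⟨hi, hii⟩
    obtain ⟨f, hfeas, hdd⟩ := HoffmanCirc.backward_main E l u hi hii
    refine ⟨f, fun e he => ?_, fun j => sub_eq_zero.mp (hdd j)⟩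
    constructor
    · calc l e ≤ (⌈l e⌉ : ℝ) := Int.le_ceil _
        _ ≤ (f e : ℝ) := by exact_mod_cast (hfeas e he).1
    · calc (f e : ℝ) ≤ (⌊u e⌋ : ℝ) := by exact_mod_cast (hfeas e he).2
        _ ≤ u e := Int.floor_le _
end

section
/- Let G = (V, E) be a finite strongly connected digraph and let l, u : E → ℝ satisfy 0 < l(e) ≤ u(e) for every edge e. Suppose (i) ⌈l(e)⌉ ≤ ⌊u(e)⌋ for every edge e ∈ E, and (ii) for every proper subset S ⊂ V, Σ_{e ∈ E⁻_S} ⌈l(e)⌉ ≤ Σ_{e ∈ E⁺_S} ⌊u(e)⌋. Then there exists an integer flow assignment f : E → ℤ with l(e) ≤ f(e) ≤ u(e) for every edge e ∈ E and with flow balance b_j = 0 for every node v_j ∈ V. -/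
open Finset

section aux
variable {V : Type*} [DecidableEq V]

private def bal (E : Finset (V × V)) (f : V × V → ℤ) (j : V) : ℤ :=
  ∑ e ∈ E.filter (fun e => e.1 = j), f e - ∑ e ∈ E.filter (fun e => e.2 = j), f e

private lemma sum_fiber (E : Finset (V × V)) (f : V × V → ℤ)
    (S : Finset V) (p : V × V → V) :
    ∑ j ∈ S, ∑ e ∈ E.filter (fun e => p e = j), f e
      = ∑ e ∈ E.filter (fun e => p e ∈ S), f e := by
  simp_rw [Finset.sum_filter]
  rw [Finset.sum_comm]
  refine Finset.sum_congr rfl fun e _ => ?_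
  simp [Finset.sum_ite_eq S (p e) (fun _ => f e)]

private lemma cut_identity (E : Finset (V × V)) (f : V × V → ℤ) (S : Finset V) :
    ∑ j ∈ S, bal E f j
      = ∑ e ∈ E.filter (fun e => e.1 ∈ S ∧ e.2 ∉ S), f e
        - ∑ e ∈ E.filter (fun e => e.2 ∈ S ∧ e.1 ∉ S), f e := by
  unfold bal
  rw [Finset.sum_sub_distrib, sum_fiber E f S Prod.fst, sum_fiber E f S Prod.snd]
  have h1 := Finset.sum_filter_add_sum_filter_not (E.filter (fun e => e.1 ∈ S))
      (fun e => e.2 ∈ S) f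
  have h2 := Finset.sum_filter_add_sum_filter_not (E.filter (fun e => e.2 ∈ S))
      (fun e => e.1 ∈ S) f
  rw [Finset.filter_filter, Finset.filter_filter] at h1 h2
  have h3 : E.filter (fun e => e.2 ∈ S ∧ e.1 ∈ S) = E.filter (fun e => e.1 ∈ S ∧ e.2 ∈ S) := by
    apply Finset.filter_congr; intro x _; simp [and_comm]
  rw [h3] at h2
  omega
end aux



private lemma exists_nodup_chain {α : Type*} [DecidableEq α] {R : α → α → Prop} {a b : α}
    (h : Relation.ReflTransGen R a b) :
    ∃ L : List α, List.Chain' R (a :: L) ∧ (a :: L).Nodup ∧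
      (a :: L).getLast? = some b := by
  induction h with
  | refl => exact ⟨[], List.isChain_singleton a, List.nodup_singleton a, rfl⟩
  | @tail b c hab hbc ih =>
    obtain ⟨L, hc, hnd, hlast⟩ := ih
    by_cases hmem : c ∈ a :: L
    · set M := a :: L with hM
      have hn : M.idxOf c < M.length := List.idxOf_lt_length_iff.2 hmem
      have h1 : a :: L.take (M.idxOf c) = M.take (M.idxOf c + 1) := by
        simp [hM, List.take_succ_cons]
      have hlen : (M.take (M.idxOf c + 1)).length = M.idxOf c + 1 := by
        rw [List.length_take]; omega
      refine ⟨L.take (M.idxOf c), ?_, ?_, ?_⟩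
      · rw [h1]; exact hc.take _
      · rw [h1]; exact (List.take_sublist _ _).nodup hnd
      · rw [h1, List.getLast?_eq_getElem?, hlen]
        simp only [Nat.add_sub_cancel]
        rw [List.getElem?_take, if_pos (Nat.lt_succ_self _),
          List.getElem?_eq_getElem hn, List.getElem_idxOf hn]
    · refine ⟨L ++ [c], ?_, ?_, ?_⟩
      · have heq : a :: (L ++ [c]) = (a :: L) ++ [c] := by simp
        rw [heq, List.Chain', List.isChain_append]
        refine ⟨hc, List.isChain_singleton c, ?_⟩
        intro x hx y hy
        rw [hlast, Option.mem_def, Option.some.injEq] at hx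
        simp only [List.head?_cons, Option.mem_def, Option.some.injEq] at hy
        subst hx; subst hy; exact hbc
      · have heq : a :: (L ++ [c]) = (a :: L) ++ [c] := by simp
        rw [heq]
        exact List.Nodup.append hnd (List.nodup_singleton c)
          (by intro x hx hxc; simp at hxc; subst hxc; exact hmem hx)
      · have heq : a :: (L ++ [c]) = (a :: L) ++ [c] := by simp
        rw [heq, List.getLast?_concat]
private lemma bal_add_indicator {V : Type*} [DecidableEq V] (E : Finset (V × V)) (f : V × V → ℤ)
    (e₀ : V × V) (he : e₀ ∈ E) (c : ℤ) (j : V) :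
    bal E (fun e => f e + if e = e₀ then c else 0) j
      = bal E f j + (if e₀.1 = j then c else 0) - (if e₀.2 = j then c else 0) := by
  unfold bal
  rw [Finset.sum_add_distrib, Finset.sum_add_distrib,
    Finset.sum_ite_eq' (E.filter (fun e => e.1 = j)) e₀ (fun _ => c),
    Finset.sum_ite_eq' (E.filter (fun e => e.2 = j)) e₀ (fun _ => c)]
  simp only [Finset.mem_filter, he, true_and]
  ring

private lemma chain'_mono_mem {α : Type*} {R S : α → α → Prop} :
    ∀ {l : List α}, List.Chain' R l → (∀ a ∈ l, ∀ b ∈ l, R a b → S a b) → List.Chain' S l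
  | [], _, _ => List.IsChain.nil
  | [_], _, _ => List.isChain_singleton _
  | a :: b :: l, h, hmem => by
    rw [List.Chain', List.isChain_cons_cons] at h ⊢
    exact ⟨hmem a (by simp) b (by simp) h.1,
      chain'_mono_mem h.2 (fun x hx y hy => hmem x (by simp [hx]) y (by simp [hy]))⟩

private def res {V : Type*} (E : Finset (V × V)) (l u : V × V → ℝ) (f : V × V → ℤ)
    (x y : V) : Prop :=
  ((y, x) ∈ E ∧ f (y, x) < ⌊u (y, x)⌋) ∨ ((x, y) ∈ E ∧ ⌈l (x, y)⌉ < f (x, y))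

private lemma augment {V : Type*} [DecidableEq V] (E : Finset (V × V)) (l u : V × V → ℝ) :
    ∀ (L : List V) (f : V × V → ℤ), (∀ e ∈ E, ⌈l e⌉ ≤ f e ∧ f e ≤ ⌊u e⌋) →
    ∀ x t : V, List.Chain' (res E l u f) (x :: L) → (x :: L).Nodup →
      (x :: L).getLast? = some t →
    ∃ g : V × V → ℤ, (∀ e ∈ E, ⌈l e⌉ ≤ g e ∧ g e ≤ ⌊u e⌋) ∧
      ∀ j, bal E g j = bal E f j - (if j = x then 1 else 0) + (if j = t then 1 else 0) := by
  intro L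
  induction L with
  | nil =>
    intro f hf x t _ _ hlast
    simp only [List.getLast?_singleton, Option.some.injEq] at hlast
    exact ⟨f, hf, fun j => by rw [hlast]; ring⟩
  | cons z L' ih =>
    intro f hf x t hchain hnd hlast
    rw [List.Chain', List.isChain_cons_cons] at hchain
    obtain ⟨hr, hchain'⟩ := hchain
    have hxz : x ≠ z := by
      intro h; subst h; simp at hnd
    have hxmem : x ∉ z :: L' := by
      intro h; exact (List.nodup_cons.1 hnd).1 h
    have hnd' : (z :: L').Nodup := (List.nodup_cons.1 hnd).2
    have hlast' : (z :: L').getLast? = some t := by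
      rwa [List.getLast?_cons_cons] at hlast
    -- pick the pushed edge
    obtain ⟨e₀, c, he₀, hroom, hx1, hform⟩ :
        ∃ (e₀ : V × V) (c : ℤ), e₀ ∈ E ∧
          (⌈l e₀⌉ ≤ f e₀ + c ∧ f e₀ + c ≤ ⌊u e₀⌋) ∧
          (e₀.1 = x ∨ e₀.2 = x) ∧
          (∀ j, (if e₀.1 = j then c else 0) - (if e₀.2 = j then c else 0)
            = (if j = z then 1 else 0) - (if j = x then 1 else 0)) := by
      rcases hr with ⟨hmem, hlt⟩ | ⟨hmem, hlt⟩
      · refine ⟨(z, x), 1, hmem, ⟨?_, hlt⟩, Or.inr rfl, ?_⟩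
        · exact le_trans (hf _ hmem).1 (by omega)
        · intro j
          by_cases h1 : j = z <;> by_cases h2 : j = x <;>
            simp [h1, h2, hxz, hxz.symm] <;> simp_all [eq_comm]
      · refine ⟨(x, z), -1, hmem, ⟨by omega, ?_⟩, Or.inl rfl, ?_⟩
        · exact le_trans (by omega) (hf _ hmem).2
        · intro j
          by_cases h1 : j = z <;> by_cases h2 : j = x <;>
            simp [h1, h2, hxz, hxz.symm] <;> simp_all [eq_comm]
    set f₁ : V × V → ℤ := fun e => f e + if e = e₀ then c else 0 with hf₁
    have hf₁feas : ∀ e ∈ E, ⌈l e⌉ ≤ f₁ e ∧ f₁ e ≤ ⌊u e⌋ := by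
      intro e he
      by_cases h : e = e₀
      · subst h; simpa [hf₁] using hroom
      · simpa [hf₁, h] using hf e he
    have hagree : ∀ p : V × V, p.1 ≠ x → p.2 ≠ x → f₁ p = f p := by
      intro p h1 h2
      have : p ≠ e₀ := by
        intro h; subst h; rcases hx1 with h | h
        · exact h1 h
        · exact h2 h
      simp [hf₁, this]
    have hres₁ : ∀ a b : V, a ≠ x → b ≠ x → res E l u f a b → res E l u f₁ a b := by
      intro a b ha hb hr
      rcases hr with ⟨hmem, hlt⟩ | ⟨hmem, hlt⟩
      · exact Or.inl ⟨hmem, by rwa [hagree (b, a) hb ha]⟩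
      · exact Or.inr ⟨hmem, by rwa [hagree (a, b) ha hb]⟩
    have hchain₁ : List.Chain' (res E l u f₁) (z :: L') := by
      refine chain'_mono_mem hchain' ?_
      intro a ha b hb hr
      exact hres₁ a b (fun h => hxmem (h ▸ ha)) (fun h => hxmem (h ▸ hb)) hr
    obtain ⟨g, hgfeas, hgbal⟩ := ih f₁ hf₁feas z t hchain₁ hnd' hlast'
    refine ⟨g, hgfeas, fun j => ?_⟩
    have hb₁ : bal E f₁ j = bal E f j + ((if j = z then 1 else 0) - (if j = x then 1 else 0)) := by
      rw [hf₁, bal_add_indicator E f e₀ he₀ c j]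
      rw [← hform j]; ring
    rw [hgbal j, hb₁]; ring



/-- Sufficiency of the integer circulation conditions: if a finite strongly
connected digraph (`E : Finset (V × V)`, edge `(vj, vi)` directed from `vi`
to `vj`, no self-loops) with real edge bounds `0 < l e ≤ u e` satisfies the
integer circulation conditions, then there exists an integer flow assignment
satisfying the interval constraints with zero flow balance at every node. -/
theorem stmt_2 {V : Type*} [Fintype V] [DecidableEq V]
    (E : Finset (V × V)) (hE : ∀ e ∈ E, e.1 ≠ e.2)
    (hconn : ∀ x y : V, Relation.ReflTransGen (fun a b => (b, a) ∈ E) x y)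
    (l u : V × V → ℝ)
    (hl : ∀ e ∈ E, 0 < l e) (hlu : ∀ e ∈ E, l e ≤ u e)
    (hceil : ∀ e ∈ E, ⌈l e⌉ ≤ ⌊u e⌋)
    (hcirc : ∀ S : Finset V, S ⊂ Finset.univ →
      ∑ e ∈ E.filter (fun e => e.1 ∈ S ∧ e.2 ∉ S), ⌈l e⌉
        ≤ ∑ e ∈ E.filter (fun e => e.2 ∈ S ∧ e.1 ∉ S), ⌊u e⌋) :
    ∃ f : V × V → ℤ,
      (∀ e ∈ E, l e ≤ (f e : ℝ) ∧ (f e : ℝ) ≤ u e) ∧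
      (∀ j : V,
        ∑ e ∈ E.filter (fun e => e.1 = j), f e
          = ∑ e ∈ E.filter (fun e => e.2 = j), f e) := by
  classical
  have hP : ∃ n : ℕ, ∃ f : V × V → ℤ, (∀ e ∈ E, ⌈l e⌉ ≤ f e ∧ f e ≤ ⌊u e⌋) ∧
      ∑ j : V, (bal E f j).toNat = n :=
    ⟨∑ j : V, (bal E (fun e => ⌈l e⌉) j).toNat, fun e => ⌈l e⌉,
      fun e he => ⟨le_refl _, hceil e he⟩, rfl⟩
  obtain ⟨f, hf, hΦ⟩ := Nat.find_spec hP
  have hmin : Nat.find hP = 0 := by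
    by_contra hne
    have hsum_ne : ∑ j : V, (bal E f j).toNat ≠ 0 := by rw [hΦ]; exact hne
    obtain ⟨s, -, hs0⟩ := Finset.exists_ne_zero_of_sum_ne_zero hsum_ne
    have hs : 0 < bal E f s := by omega
    by_cases hneg : ∃ t : V, Relation.ReflTransGen (res E l u f) s t ∧ bal E f t < 0
    · obtain ⟨t, hreach, ht⟩ := hneg
      obtain ⟨L, hchain, hnd, hlast⟩ := exists_nodup_chain hreach
      obtain ⟨g, hgfeas, hgbal⟩ := augment E l u L f hf s t hchain hnd hlast
      have hst : s ≠ t := fun h => by rw [h] at hs; omega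
      have hlt : ∑ j : V, (bal E g j).toNat < Nat.find hP := by
        rw [← hΦ]
        apply Finset.sum_lt_sum
        · intro j _
          have hj := hgbal j
          by_cases h1 : j = s
          · subst h1
            rw [if_pos rfl, if_neg hst] at hj
            omega
          · rw [if_neg h1] at hj
            by_cases h2 : j = t
            · subst h2
              rw [if_pos rfl] at hj
              omega
            · rw [if_neg h2] at hj
              omega
        · refine ⟨s, Finset.mem_univ s, ?_⟩
          have hjs := hgbal s
          rw [if_pos rfl, if_neg hst] at hjs
          omega
      exact Nat.find_min hP hlt ⟨g, hgfeas, rfl⟩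
    · push_neg at hneg
      set S : Finset V :=
        Finset.univ.filter (fun y => Relation.ReflTransGen (res E l u f) s y) with hS
      have hsS : s ∈ S := by
        rw [hS, Finset.mem_filter]; exact ⟨Finset.mem_univ s, Relation.ReflTransGen.refl⟩
      have hpos : 0 < ∑ j ∈ S, bal E f j := by
        apply Finset.sum_pos'
        · intro j hj; rw [hS, Finset.mem_filter] at hj; exact hneg j hj.2
        · exact ⟨s, hsS, hs⟩
      have htot : ∑ j ∈ (Finset.univ : Finset V), bal E f j = 0 := by
        rw [cut_identity]; simp
      have hSne : S ≠ Finset.univ := by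
        intro h; rw [h, htot] at hpos; exact lt_irrefl 0 hpos
      have hcut := hcirc S (ssubset_of_subset_of_ne (Finset.subset_univ S) hSne)
      have hout : ∀ e ∈ E.filter (fun e => e.1 ∈ S ∧ e.2 ∉ S), f e = ⌈l e⌉ := by
        intro e he
        rw [Finset.mem_filter] at he
        obtain ⟨heE, h1, h2⟩ := he
        rcases lt_or_eq_of_le (hf e heE).1 with hlt' | heq
        · exfalso
          apply h2
          rw [hS, Finset.mem_filter]
          refine ⟨Finset.mem_univ _, ?_⟩
          have h1' : Relation.ReflTransGen (res E l u f) s e.1 := by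
            rw [hS, Finset.mem_filter] at h1; exact h1.2
          exact h1'.tail (Or.inr ⟨by rwa [Prod.mk.eta], by rwa [Prod.mk.eta]⟩)
        · omega
      have hin : ∀ e ∈ E.filter (fun e => e.2 ∈ S ∧ e.1 ∉ S), f e = ⌊u e⌋ := by
        intro e he
        rw [Finset.mem_filter] at he
        obtain ⟨heE, h1, h2⟩ := he
        rcases lt_or_eq_of_le (hf e heE).2 with hlt' | heq
        · exfalso
          apply h2
          rw [hS, Finset.mem_filter]
          refine ⟨Finset.mem_univ _, ?_⟩
          have h1' : Relation.ReflTransGen (res E l u f) s e.2 := by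
            rw [hS, Finset.mem_filter] at h1; exact h1.2
          exact h1'.tail (Or.inl ⟨by rwa [Prod.mk.eta], by rwa [Prod.mk.eta]⟩)
        · omega
      have hci := cut_identity E f S
      rw [Finset.sum_congr rfl hout, Finset.sum_congr rfl hin] at hci
      omega
  rw [hmin] at hΦ
  have hle : ∀ j : V, bal E f j ≤ 0 := by
    intro j
    have := (Finset.sum_eq_zero_iff.1 hΦ) j (Finset.mem_univ j)
    omega
  have htot : ∑ j ∈ (Finset.univ : Finset V), bal E f j = 0 := by
    rw [cut_identity]; simp
  have hz : ∀ j : V, bal E f j = 0 := by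
    intro j
    exact (Finset.sum_eq_zero_iff_of_nonpos (fun i _ => hle i)).1 htot j (Finset.mem_univ j)
  refine ⟨f, fun e he => ⟨?_, ?_⟩, fun j => ?_⟩
  · exact le_trans (Int.le_ceil (l e)) (by exact_mod_cast (hf e he).1)
  · exact le_trans (by exact_mod_cast (hf e he).2) (Int.floor_le (u e))
  · have := hz j
    unfold bal at this
    omega
end

section
/- Let G = (V, E) be a finite digraph with real bounds 0 < l(e) ≤ u(e) on each edge, and let f : E → ℤ be a flow assignment with ⌈l(e)⌉ ≤ f(e) ≤ ⌊u(e)⌋ for every edge e. Let S ⊆ V be a set of nodes such that f(e) = ⌈l(e)⌉ for every edge e ∈ E⁻_S (edges entering S) and f(e) = ⌊u(e)⌋ for every edge e ∈ E⁺_S (edges leaving S). If Σ_{v_j ∈ S} b_j > 0, then Σ_{e ∈ E⁻_S} ⌈l(e)⌉ > Σ_{e ∈ E⁺_S} ⌊u(e)⌋; that is, the integer circulation condition fails for the set S. -/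
/-!
Summing the balances over `S`, every edge with both ends in `S` contributes once with each sign,
so the total is the flow across the cut in one direction minus the flow across it in the other.
The hypotheses pin these two cut flows to `∑ ⌈l⌉` and `∑ ⌊u⌋`.
-/

open Finset

theorem Finset.sum_filter_sub_sum_filter {ι G : Type*} [AddCommGroup G] (s : Finset ι)
    (p q : ι → Prop) [DecidablePred p] [DecidablePred q] (f : ι → G) :
    ∑ x ∈ s with p x, f x - ∑ x ∈ s with q x, f x
      = ∑ x ∈ s with (p x ∧ ¬q x), f x - ∑ x ∈ s with (q x ∧ ¬p x), f x := by
  rw [← sum_filter_add_sum_filter_not (s.filter p) q, ← sum_filter_add_sum_filter_not (s.filter q) p]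
  simp only [filter_filter, and_comm (a := q _)]
  abel

theorem sum_balance_eq_cut_sub_cut {V G : Type*} [DecidableEq V] [AddCommGroup G]
    (E : Finset (V × V)) (f : V × V → G) (S : Finset V) :
    ∑ j ∈ S, (∑ e ∈ E with e.1 = j, f e - ∑ e ∈ E with e.2 = j, f e)
      = ∑ e ∈ E with (e.1 ∈ S ∧ e.2 ∉ S), f e - ∑ e ∈ E with (e.2 ∈ S ∧ e.1 ∉ S), f e := by
  rw [sum_sub_distrib, sum_fiberwise_eq_sum_filter, sum_fiberwise_eq_sum_filter,
    sum_filter_sub_sum_filter]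

theorem stmt_7_general {V : Type*} [DecidableEq V]
    (E : Finset (V × V))
    (l u : V × V → ℝ)
    (f : V × V → ℤ)
    (S : Finset V)
    (hin : ∀ e ∈ E, e.1 ∈ S → e.2 ∉ S → f e = ⌈l e⌉)
    (hout : ∀ e ∈ E, e.2 ∈ S → e.1 ∉ S → f e = ⌊u e⌋)
    (hpos : 0 < ∑ j ∈ S,
      (∑ e ∈ E.filter (fun e => e.1 = j), f e
        - ∑ e ∈ E.filter (fun e => e.2 = j), f e)) :
    ∑ e ∈ E.filter (fun e => e.2 ∈ S ∧ e.1 ∉ S), ⌊u e⌋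
      < ∑ e ∈ E.filter (fun e => e.1 ∈ S ∧ e.2 ∉ S), ⌈l e⌉ := by
  have h_in : ∑ e ∈ E with (e.1 ∈ S ∧ e.2 ∉ S), f e = ∑ e ∈ E with (e.1 ∈ S ∧ e.2 ∉ S), ⌈l e⌉ :=
    sum_congr rfl fun e he ↦ by
      obtain ⟨heE, hS, hS'⟩ := mem_filter.1 he
      exact hin e heE hS hS'
  have h_out : ∑ e ∈ E with (e.2 ∈ S ∧ e.1 ∉ S), f e = ∑ e ∈ E with (e.2 ∈ S ∧ e.1 ∉ S), ⌊u e⌋ :=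
    sum_congr rfl fun e he ↦ by
      obtain ⟨heE, hS, hS'⟩ := mem_filter.1 he
      exact hout e heE hS hS'
  rw [sum_balance_eq_cut_sub_cut, h_in, h_out] at hpos
  exact sub_pos.1 hpos

/-- If the flows on all edges entering a set `S` are at their integer lower
limits, the flows on all edges leaving `S` are at their integer upper limits,
and the balances of the nodes of `S` sum to a positive quantity, then the
integer circulation condition fails for `S`. -/
theorem stmt_7 {V : Type*} [Fintype V] [DecidableEq V]
    (E : Finset (V × V)) (hE : ∀ e ∈ E, e.1 ≠ e.2)
    (l u : V × V → ℝ)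
    (hl : ∀ e ∈ E, 0 < l e) (hlu : ∀ e ∈ E, l e ≤ u e)
    (f : V × V → ℤ)
    (hf : ∀ e ∈ E, ⌈l e⌉ ≤ f e ∧ f e ≤ ⌊u e⌋)
    (S : Finset V)
    (hin : ∀ e ∈ E, e.1 ∈ S → e.2 ∉ S → f e = ⌈l e⌉)
    (hout : ∀ e ∈ E, e.2 ∈ S → e.1 ∉ S → f e = ⌊u e⌋)
    (hpos : 0 < ∑ j ∈ S,
      (∑ e ∈ E.filter (fun e => e.1 = j), f e
        - ∑ e ∈ E.filter (fun e => e.2 = j), f e)) :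
    ∑ e ∈ E.filter (fun e => e.2 ∈ S ∧ e.1 ∉ S), ⌊u e⌋
      < ∑ e ∈ E.filter (fun e => e.1 ∈ S ∧ e.2 ∉ S), ⌈l e⌉ :=
  stmt_7_general E l u f S hin hout hpos
end

section
/- Let V be a finite set and let b, b' : V → ℤ satisfy Σ_{j∈V} b_j = 0 and Σ_{j∈V} b'_j = 0. Suppose that {j ∈ V : b'_j < 0} ⊆ {j ∈ V : b_j < 0} (no node with nonnegative balance becomes negative) and that b_j ≤ b'_j for every j with b_j < 0 (the balance of every negatively balanced node does not decrease). Then Σ_{j∈V} |b'_j| ≤ Σ_{j∈V} |b_j|; that is, the total imbalance is nonincreasing. -/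
open Finset

lemma abs_sum_eq {V : Type*} [Fintype V] (c : V → ℤ) (hc : ∑ j : V, c j = 0) :
    ∑ j : V, |c j| = -2 * ∑ j ∈ univ.filter (fun j => c j < 0), c j := by
  classical
  have h1 : ∑ j : V, |c j| =
      ∑ j ∈ univ.filter (fun j => c j < 0), |c j|
      + ∑ j ∈ univ.filter (fun j => ¬ c j < 0), |c j| :=
    (sum_filter_add_sum_filter_not univ _ _).symm
  have h2 : ∑ j : V, c j =
      ∑ j ∈ univ.filter (fun j => c j < 0), c j
      + ∑ j ∈ univ.filter (fun j => ¬ c j < 0), c j :=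
    (sum_filter_add_sum_filter_not univ _ _).symm
  have e1 : ∑ j ∈ univ.filter (fun j => c j < 0), |c j|
      = -∑ j ∈ univ.filter (fun j => c j < 0), c j := by
    rw [← Finset.sum_neg_distrib]
    exact Finset.sum_congr rfl fun j hj => abs_of_neg (mem_filter.mp hj).2
  have e2 : ∑ j ∈ univ.filter (fun j => ¬ c j < 0), |c j|
      = ∑ j ∈ univ.filter (fun j => ¬ c j < 0), c j := by
    exact Finset.sum_congr rfl fun j hj => abs_of_nonneg (not_lt.mp (mem_filter.mp hj).2)
  rw [hc] at h2
  omega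

/-- Monotonicity of the total imbalance: if two balance vectors `b` and `b'`
on a finite node set each sum to zero, no node with nonnegative balance under
`b` has negative balance under `b'`, and the balance of every negatively
balanced node does not decrease, then the total imbalance is nonincreasing. -/
theorem stmt_8 {V : Type*} [Fintype V]
    (b b' : V → ℤ)
    (hb : ∑ j : V, b j = 0) (hb' : ∑ j : V, b' j = 0)
    (hsub : ∀ j : V, b' j < 0 → b j < 0)
    (hmono : ∀ j : V, b j < 0 → b j ≤ b' j) :
    ∑ j : V, |b' j| ≤ ∑ j : V, |b j| := by
  classical
  rw [abs_sum_eq b hb, abs_sum_eq b' hb']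
  have hNsub : univ.filter (fun j => b' j < 0) ⊆ univ.filter (fun j => b j < 0) := by
    intro j hj
    simp only [mem_filter, mem_univ, true_and] at *
    exact hsub j hj
  have h1 : ∑ j ∈ univ.filter (fun j => b j < 0), b j
      ≤ ∑ j ∈ univ.filter (fun j => b' j < 0), b j := by
    have := Finset.sum_le_sum_of_subset_of_nonneg hNsub
      (f := fun j => -b j) (fun j hj _ => by
        have := (mem_filter.mp hj).2; simp; omega)
    simp only [Finset.sum_neg_distrib] at this
    omega
  have h2 : ∑ j ∈ univ.filter (fun j => b' j < 0), b j
      ≤ ∑ j ∈ univ.filter (fun j => b' j < 0), b' j := by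
    apply Finset.sum_le_sum
    intro j hj
    exact hmono j (hsub j (mem_filter.mp hj).2)
  linarith
end
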